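/- arXiv:2012.10719 — 3 statements merged into one kernel-verified Lean document; each statement's English description precedes it below -/
import Mathlib

section
/- For p > 2, if u ∈ L^p(0,1) satisfies ∫₀¹∫₀¹ |u(x)-u(y)|^p / |x-y|^p dx dy < ∞, then u has a representative that is Hölder continuous on [0,1] with exponent (p-2)/p. -/
open MeasureTheory Set Real Filter Topology
open scoped ENNReal NNReal

/-- Lebesgue measure restricted to the unit interval `(0,1)`. -/
noncomputable def muI : Measure ℝ := volume.restrict (Set.Ioo 0 1)

/-- Product measure on the unit square `(0,1)²`. -/
noncomputable def muS : Measure (ℝ × ℝ) := muI.prod muI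

/-- Nonlocal difference quotient `Du(x,X) = (u X - u x)/(X - x)`. -/
noncomputable def Du (u : ℝ → ℝ) : ℝ × ℝ → ℝ := fun p => (u p.2 - u p.1) / (p.2 - p.1)

/-! A Campanato-type argument. If the points of `S, T ⊆ (0,1)` are at distance at most `D`, then
Hölder's inequality on `S × T` gives `|⨍_S u - ⨍_T u| ≤ D E^{1/p} (|S| |T|)^{-1/p}`, where `E` is
the energy. For the intervals `(x - r, x + r) ∩ (0,1)`, of length at least `r`, this bounds the
difference of two averages at comparable scales and nearby centres by a multiple of
`r^{1 - 2/p}`. Hence the dyadic averages converge at a geometric rate to a function `v`, which is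
Hölder continuous with exponent `1 - 2/p`, and `v = u` almost everywhere by Lebesgue's
differentiation theorem. -/

instance : IsFiniteMeasure muI := by
  unfold muI
  infer_instance

noncomputable def gagliardoEnergy (p : ℝ) (u : ℝ → ℝ) (μ : Measure (ℝ × ℝ)) : ℝ≥0∞ :=
  ∫⁻ q, ENNReal.ofReal (|u q.1 - u q.2| ^ p / |q.1 - q.2| ^ p) ∂μ

theorem gagliardoEnergy_congr_ae {p : ℝ} {μ : Measure ℝ} [SFinite μ] {u v : ℝ → ℝ}
    (h : u =ᵐ[μ] v) : gagliardoEnergy p u (μ.prod μ) = gagliardoEnergy p v (μ.prod μ) := by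
  refine lintegral_congr_ae ?_
  filter_upwards [Measure.quasiMeasurePreserving_fst.ae_eq_comp h,
    Measure.quasiMeasurePreserving_snd.ae_eq_comp h] with q h₁ h₂
  simp only [Function.comp_apply] at h₁ h₂
  rw [h₁, h₂]

theorem setAverage_sub_setAverage_eq {α : Type*} [MeasurableSpace α] {μ : Measure α}
    {u : α → ℝ} {S T : Set α} (hS : 0 < μ.real S) (hT : 0 < μ.real T)
    (huS : IntegrableOn u S μ) (huT : IntegrableOn u T μ) :
    (⨍ x in S, u x ∂μ) - ⨍ y in T, u y ∂μ =
      (∫ z, (u z.1 - u z.2) ∂(μ.restrict S).prod (μ.restrict T)) / (μ.real S * μ.real T) := by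
  have := isFiniteMeasure_restrict.2 (ENNReal.toReal_pos_iff.1 hS).2.ne
  have := isFiniteMeasure_restrict.2 (ENNReal.toReal_pos_iff.1 hT).2.ne
  rw [integral_sub (huS.comp_fst _) (huT.comp_snd _), integral_fun_fst, integral_fun_snd,
    setAverage_eq, setAverage_eq]
  simp only [measureReal_restrict_apply_univ, smul_eq_mul]
  field_simp

theorem lintegral_enorm_sub_rpow_le {p D : ℝ} (hp : 0 < p) (hD : 0 ≤ D) {u : ℝ → ℝ}
    (hu : Measurable u) {S T : Set ℝ} (hdist : ∀ x ∈ S, ∀ y ∈ T, |x - y| ≤ D) :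
    ∫⁻ z, ‖u z.1 - u z.2‖ₑ ^ p ∂(volume.restrict S).prod (volume.restrict T) ≤
      .ofReal (D ^ p) * gagliardoEnergy p u ((volume.restrict S).prod (volume.restrict T)) := by
  rw [gagliardoEnergy, ← lintegral_const_mul' _ _ ENNReal.ofReal_ne_top, Measure.prod_restrict]
  refine setLIntegral_mono (by fun_prop) ?_
  rintro ⟨x, y⟩ ⟨hx, hy⟩
  rw [Real.enorm_eq_ofReal_abs, ENNReal.ofReal_rpow_of_nonneg (abs_nonneg _) hp.le,
    ← ENNReal.ofReal_mul (by positivity)]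
  refine ENNReal.ofReal_le_ofReal ?_
  rcases eq_or_ne x y with rfl | hxy
  · simp [Real.zero_rpow hp.ne']
  rw [mul_div_assoc', le_div_iff₀ (Real.rpow_pos_of_pos (abs_pos.2 (sub_ne_zero.2 hxy)) p),
    mul_comm]
  exact mul_le_mul_of_nonneg_right (Real.rpow_le_rpow (abs_nonneg _) (hdist x hx y hy) hp.le)
    (by positivity)

theorem abs_setAverage_sub_setAverage_le {p : ℝ} (hp : 1 ≤ p) {u : ℝ → ℝ} (hu : Measurable u)
    {S T : Set ℝ} (hS : 0 < volume.real S) (hT : 0 < volume.real T)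
    (huS : IntegrableOn u S) (huT : IntegrableOn u T) {D E : ℝ} (hD : 0 ≤ D) (hE₀ : 0 ≤ E)
    (hdist : ∀ x ∈ S, ∀ y ∈ T, |x - y| ≤ D)
    (hE : gagliardoEnergy p u ((volume.restrict S).prod (volume.restrict T)) ≤ .ofReal E) :
    |(⨍ x in S, u x) - ⨍ y in T, u y| ≤
      D * E ^ (1 / p) * (volume.real S * volume.real T) ^ (-(1 / p)) := by
  have hp₀ : 0 < p := by linarith
  have hp₁ : 0 ≤ 1 / p := by positivity
  have hp₂ : 0 ≤ 1 - 1 / p := sub_nonneg.2 ((div_le_one hp₀).2 hp)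
  set ν := (volume.restrict S).prod (volume.restrict T)
  set P := volume.real S * volume.real T
  have hP : 0 < P := mul_pos hS hT
  have hνuniv : ν univ = .ofReal P := by
    simp [ν, P, ← univ_prod_univ, Measure.prod_prod, measureReal_def,
      (ENNReal.toReal_pos_iff.1 hS).2.ne, (ENNReal.toReal_pos_iff.1 hT).2.ne, ENNReal.ofReal_mul]
  have hholder : ‖∫ z, (u z.1 - u z.2) ∂ν‖ₑ ≤
      (∫⁻ z, ‖u z.1 - u z.2‖ₑ ^ p ∂ν) ^ (1 / p) * ν univ ^ (1 - 1 / p) := by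
    have := eLpNorm'_le_eLpNorm'_mul_rpow_measure_univ one_pos hp
      (f := fun z : ℝ × ℝ => u z.1 - u z.2) (μ := ν) (by fun_prop)
    simp only [eLpNorm'_eq_lintegral_enorm, ENNReal.rpow_one, div_one] at this
    exact (enorm_integral_le_lintegral_enorm _).trans this
  have henergy : ∫⁻ z, ‖u z.1 - u z.2‖ₑ ^ p ∂ν ≤ .ofReal (D ^ p) * .ofReal E :=
    (lintegral_enorm_sub_rpow_le hp₀ hD hu hdist).trans (by gcongr)
  have hbound : |∫ z, (u z.1 - u z.2) ∂ν| ≤ D * E ^ (1 / p) * P ^ (1 - 1 / p) := by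
    rw [← ENNReal.ofReal_le_ofReal_iff (by positivity), ← Real.enorm_eq_ofReal_abs]
    refine hholder.trans ((mul_le_mul_left (ENNReal.rpow_le_rpow henergy hp₁) _).trans_eq ?_)
    rw [hνuniv, ← ENNReal.ofReal_mul (by positivity),
      ENNReal.ofReal_rpow_of_nonneg (mul_nonneg (by positivity) hE₀) hp₁,
      ENNReal.ofReal_rpow_of_nonneg hP.le hp₂, ← ENNReal.ofReal_mul (by positivity),
      Real.mul_rpow (by positivity) hE₀, ← Real.rpow_mul hD, mul_one_div_cancel hp₀.ne',
      Real.rpow_one]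
  rw [setAverage_sub_setAverage_eq hS hT huS huT, abs_div, abs_of_pos hP, div_le_iff₀ hP,
    mul_assoc, ← Real.rpow_add_one hP.ne']
  rwa [neg_add_eq_sub]

def truncBall (x r : ℝ) : Set ℝ := Ioo (max 0 (x - r)) (min 1 (x + r))

theorem truncBall_subset (x r : ℝ) : truncBall x r ⊆ Ioo 0 1 :=
  Ioo_subset_Ioo (le_max_left _ _) (min_le_left _ _)

theorem abs_sub_le_of_mem_truncBall {x r y : ℝ} (hy : y ∈ truncBall x r) : |y - x| ≤ r :=
  abs_sub_le_iff.2 ⟨by linarith [hy.2.trans_le (min_le_right _ _)],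
    by linarith [(le_max_right 0 (x - r)).trans_lt hy.1]⟩

theorem le_volume_real_truncBall {x r : ℝ} (hx : x ∈ Icc (0 : ℝ) 1) (hr₀ : 0 ≤ r) (hr : r ≤ 1) :
    r ≤ volume.real (truncBall x r) := by
  have h₁ : max 0 (x - r) + r ≤ min 1 (x + r) :=
    le_min (by linarith [max_le (sub_nonneg.2 hr) (by linarith [hx.2] : x - r ≤ 1 - r)])
      (by linarith [max_le hx.1 (by linarith : x - r ≤ x)])
  rw [truncBall, Real.volume_real_Ioo]
  exact le_max_of_le_left (by linarith)

theorem truncBall_eq_Ioo {x r : ℝ} (h₀ : r < x) (h₁ : r < 1 - x) :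
    truncBall x r = Ioo (x - r) (x + r) := by
  rw [truncBall, max_eq_right (by linarith), min_eq_right (by linarith)]

theorem abs_setAverage_truncBall_sub_le {p : ℝ} (hp : 2 ≤ p) {u : ℝ → ℝ} (hu : Measurable u)
    (hint : IntegrableOn u (Ioo 0 1)) {E : ℝ} (hE₀ : 0 ≤ E)
    (hE : gagliardoEnergy p u muS ≤ .ofReal E)
    {x y r s : ℝ} (hx : x ∈ Icc (0 : ℝ) 1) (hy : y ∈ Icc (0 : ℝ) 1) (hxy : |x - y| ≤ r)
    (hr₀ : 0 < r) (hr : r ≤ 1) (hrs : r / 2 ≤ s) (hsr : s ≤ r) :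
    |(⨍ z in truncBall x r, u z) - ⨍ z in truncBall y s, u z| ≤
      6 * E ^ (1 / p) * r ^ ((p - 2) / p) := by
  have hp₀ : 0 < p := by linarith
  set t := r / 2 with ht
  have ht₀ : 0 < t := by positivity
  have hJx : t ≤ volume.real (truncBall x r) := by
    linarith [le_volume_real_truncBall hx hr₀.le hr]
  have hJy : t ≤ volume.real (truncBall y s) :=
    hrs.trans (le_volume_real_truncBall hy (by linarith) (hsr.trans hr))
  have hdist : ∀ z ∈ truncBall x r, ∀ w ∈ truncBall y s, |z - w| ≤ 3 * r := by
    intro z hz w hw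
    have := abs_sub_le_of_mem_truncBall hz
    have := abs_sub_le_of_mem_truncBall hw
    linarith [abs_sub_le z x w, abs_sub_le x y w, abs_sub_comm w y]
  have hμ : (volume.restrict (truncBall x r)).prod (volume.restrict (truncBall y s)) ≤ muS := by
    rw [muS, muI, Measure.prod_restrict, Measure.prod_restrict]
    exact Measure.restrict_mono (prod_mono (truncBall_subset x r) (truncBall_subset y s)) le_rfl
  have hpow : t * (t * t) ^ (-(1 / p)) = t ^ ((p - 2) / p) := by
    rw [Real.mul_rpow ht₀.le ht₀.le, show (p - 2) / p = 1 + -(1 / p) + -(1 / p) by field_simp; ring,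
      Real.rpow_add ht₀, Real.rpow_add ht₀, Real.rpow_one, mul_assoc]
  calc |(⨍ z in truncBall x r, u z) - ⨍ z in truncBall y s, u z|
      ≤ 3 * r * E ^ (1 / p) *
          (volume.real (truncBall x r) * volume.real (truncBall y s)) ^ (-(1 / p)) :=
        abs_setAverage_sub_setAverage_le (by linarith) hu (ht₀.trans_le hJx) (ht₀.trans_le hJy)
          (hint.mono_set (truncBall_subset x r)) (hint.mono_set (truncBall_subset y s))
          (by positivity) hE₀ hdist ((lintegral_mono' hμ le_rfl).trans hE)
    _ ≤ 3 * r * E ^ (1 / p) * (t * t) ^ (-(1 / p)) := by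
        refine mul_le_mul_of_nonneg_left (Real.rpow_le_rpow_of_nonpos (by positivity)
          (mul_le_mul hJx hJy ht₀.le (ht₀.le.trans hJx)) ?_) (by positivity)
        exact neg_nonpos.2 (one_div_nonneg.2 hp₀.le)
    _ = 6 * E ^ (1 / p) * t ^ ((p - 2) / p) := by
        rw [← hpow, show 3 * r = 6 * t by rw [ht]; ring]
        ring
    _ ≤ 6 * E ^ (1 / p) * r ^ ((p - 2) / p) := by
        refine mul_le_mul_of_nonneg_left (Real.rpow_le_rpow ht₀.le (by linarith) ?_) (by positivity)
        exact div_nonneg (by linarith) hp₀.le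

theorem ae_tendsto_setAverage_truncBall {u : ℝ → ℝ} (hint : IntegrableOn u (Ioo 0 1))
    {r : ℕ → ℝ} (hr : Tendsto r atTop (𝓝[>] 0)) :
    ∀ᵐ x ∂muI, Tendsto (fun n => ⨍ z in truncBall x (r n), u z) atTop (𝓝 (u x)) := by
  have hloc : LocallyIntegrable ((Ioo 0 1).indicator u) volume :=
    (hint.integrable_indicator measurableSet_Ioo).locallyIntegrable
  filter_upwards [ae_restrict_of_ae (IsUnifLocDoublingMeasure.ae_tendsto_average volume hloc 1),
    ae_restrict_mem measurableSet_Ioo] with x hx hxI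
  have hpos : ∀ᶠ n in atTop, 0 < r n := hr self_mem_nhdsWithin
  have hsmall : ∀ᶠ n in atTop, r n < min x (1 - x) :=
    (tendsto_nhds_of_tendsto_nhdsWithin hr).eventually
      (gt_mem_nhds (lt_min hxI.1 (by linarith [hxI.2])))
  have hlim := hx (fun _ => x) r hr (hpos.mono fun n hn => by simpa using hn.le)
  rw [indicator_of_mem hxI] at hlim
  refine hlim.congr' ?_
  filter_upwards [hsmall] with n hn
  have hJ := truncBall_eq_Ioo (hn.trans_le (min_le_left _ _)) (hn.trans_le (min_le_right _ _))
  rw [Real.closedBall_eq_Icc, ← Measure.restrict_congr_set Ioo_ae_eq_Icc, ← hJ]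
  exact setAverage_congr_fun measurableSet_Ioo
    (Eventually.of_forall fun z hz => indicator_of_mem (truncBall_subset x (r n) hz) u)

theorem exists_holder_limUnder_of_dyadic {X Y : Type*} [MetricSpace X] [PseudoMetricSpace Y]
    [CompleteSpace Y] [Nonempty Y] {s : Set X} {F : ℕ → X → Y} {C α : ℝ} (hα : 0 < α)
    (hs : ∀ x ∈ s, ∀ y ∈ s, dist x y ≤ 1)
    (hstep : ∀ x ∈ s, ∀ n : ℕ, dist (F n x) (F (n + 1) x) ≤ C * ((2 : ℝ)⁻¹ ^ n) ^ α)
    (hscale : ∀ x ∈ s, ∀ y ∈ s, ∀ n : ℕ, dist x y ≤ (2 : ℝ)⁻¹ ^ n →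
      dist (F n x) (F n y) ≤ C * ((2 : ℝ)⁻¹ ^ n) ^ α) :
    ∃ K : ℝ, ∀ x ∈ s, ∀ y ∈ s,
      dist (limUnder atTop (F · x)) (limUnder atTop (F · y)) ≤ K * dist x y ^ α := by
  set ρ : ℝ := 2⁻¹ ^ α
  have hρ : ρ < 1 := Real.rpow_lt_one (by norm_num) (by norm_num) hα
  have hpow (n : ℕ) : ((2 : ℝ)⁻¹ ^ n) ^ α = ρ ^ n := (Real.rpow_pow_comm (by norm_num) α n).symm
  have hlim : ∀ x ∈ s, ∀ n, dist (F n x) (limUnder atTop (F · x)) ≤ C * ρ ^ n / (1 - ρ) := by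
    intro x hx
    have hstep' (n : ℕ) : dist (F n x) (F (n + 1) x) ≤ C * ρ ^ n := hpow n ▸ hstep x hx n
    obtain ⟨l, hl⟩ := cauchySeq_tendsto_of_complete (cauchySeq_of_le_geometric ρ C hρ hstep')
    exact dist_le_of_le_geometric_of_tendsto ρ C hρ hstep' (tendsto_nhds_limUnder ⟨l, hl⟩)
  refine ⟨(2 * C / (1 - ρ) + C) * 2 ^ α, fun x hx y hy => ?_⟩
  rcases eq_or_ne x y with rfl | hxy
  · simp [Real.zero_rpow hα.ne']
  have hC : 0 ≤ C := by simpa using dist_nonneg.trans (hstep x hx 0)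
  obtain ⟨n, hn₁, hn⟩ := exists_nat_pow_near_of_lt_one (dist_pos.2 hxy) (hs x hx y hy)
    (by norm_num : (0 : ℝ) < 2⁻¹) (by norm_num)
  have hρn : ρ ^ n ≤ 2 ^ α * dist x y ^ α := by
    rw [← hpow, ← Real.mul_rpow (by norm_num) dist_nonneg]
    exact Real.rpow_le_rpow (by positivity) (by rw [pow_succ] at hn₁; linarith) hα.le
  calc dist (limUnder atTop (F · x)) (limUnder atTop (F · y))
      ≤ dist (F n x) (limUnder atTop (F · x)) + dist (F n x) (F n y) +
          dist (F n y) (limUnder atTop (F · y)) := by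
        rw [dist_comm (F n x)]
        exact dist_triangle4 _ _ _ _
    _ ≤ C * ρ ^ n / (1 - ρ) + C * ρ ^ n + C * ρ ^ n / (1 - ρ) := by
        gcongr
        exacts [hlim x hx n, hscale x hx y hy n hn |>.trans_eq (by rw [hpow]), hlim y hy n]
    _ = (2 * C / (1 - ρ) + C) * ρ ^ n := by ring
    _ ≤ (2 * C / (1 - ρ) + C) * (2 ^ α * dist x y ^ α) := by
        gcongr
    _ = (2 * C / (1 - ρ) + C) * 2 ^ α * dist x y ^ α := by ring

/-- For `p > 2`, a function `u ∈ Lᵖ(0,1)` with finite Gagliardo-type energy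
`∫∫ |u x - u y|ᵖ/|x-y|ᵖ` has a representative which is Hölder continuous on `[0,1]`
with exponent `(p-2)/p`. -/
theorem stmt1 (p : ℝ) (hp : 2 < p)
    (u : ℝ → ℝ) (hu : MemLp u (ENNReal.ofReal p) muI)
    (hfin : ∫⁻ q : ℝ × ℝ, ENNReal.ofReal (|u q.1 - u q.2| ^ p / |q.1 - q.2| ^ p) ∂muS < ∞) :
    ∃ v : ℝ → ℝ, (∀ᵐ x ∂muI, v x = u x) ∧
      ∃ C : ℝ, ∀ x ∈ Set.Icc (0:ℝ) 1, ∀ y ∈ Set.Icc (0:ℝ) 1,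
        |v x - v y| ≤ C * |x - y| ^ ((p - 2) / p) := by
  obtain ⟨u₀, hu₀, hueq⟩ : ∃ u₀, Measurable u₀ ∧ u =ᵐ[muI] u₀ :=
    ⟨_, hu.aemeasurable.measurable_mk, hu.aemeasurable.ae_eq_mk⟩
  have hint : IntegrableOn u₀ (Ioo 0 1) :=
    ((hu.integrable (ENNReal.one_le_ofReal.2 (by linarith))).congr hueq :)
  have hE : gagliardoEnergy p u₀ muS ≠ ∞ :=
    ((gagliardoEnergy_congr_ae hueq).symm.trans_lt hfin).ne
  set F : ℕ → ℝ → ℝ := fun n x => ⨍ z in truncBall x ((2 : ℝ)⁻¹ ^ n), u₀ z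
  have hF {x y r s : ℝ} := abs_setAverage_truncBall_sub_le (x := x) (y := y) (r := r) (s := s)
    hp.le hu₀ hint ENNReal.toReal_nonneg (ENNReal.ofReal_toReal hE).ge
  have hr (n : ℕ) : (2 : ℝ)⁻¹ ^ n ≤ 1 := pow_le_one₀ (by norm_num) (by norm_num)
  obtain ⟨K, hK⟩ := exists_holder_limUnder_of_dyadic (s := Icc (0 : ℝ) 1) (F := F)
    (div_pos (by linarith) (by linarith))
    (fun x hx y hy => Real.dist_le_of_mem_Icc_01 hx hy)
    (fun x hx n => hF hx hx (by simp) (by positivity) (hr n) (by rw [pow_succ, div_eq_mul_inv])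
      (pow_le_pow_of_le_one (by norm_num) (by norm_num) n.le_succ))
    (fun x hx y hy n hxy => hF hx hy hxy (by positivity) (hr n) (half_le_self (by positivity))
      le_rfl)
  refine ⟨fun x => limUnder atTop (F · x), ?_, K, fun x hx y hy => ?_⟩
  · have hdyadic : Tendsto (fun n : ℕ => (2 : ℝ)⁻¹ ^ n) atTop (𝓝[>] 0) :=
      tendsto_nhdsWithin_of_tendsto_nhds_of_eventually_within _
        (tendsto_pow_atTop_nhds_zero_of_lt_one (by norm_num) (by norm_num))
        (Eventually.of_forall fun n => mem_Ioi.2 (by positivity))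
    filter_upwards [ae_tendsto_setAverage_truncBall hint hdyadic, hueq] with x hx hux
    rw [hx.limUnder_eq, hux]
  · simpa only [Real.dist_eq] using hK x hx y hy
end

section
/- The map u ↦ ‖u‖_{L^p(0,1)} + ‖Du‖_{L^p((0,1)²)} defines a norm on NW^{1,p}(0,1) = {u ∈ L^p(0,1) : Du ∈ L^p((0,1)²)}, where Du(x,X) = (u(X)-u(x))/(X-x), and NW^{1,p}(0,1) equipped with this norm is a Banach space for 1 ≤ p < ∞. -/
open MeasureTheory Set Real Filter Topology
open scoped ENNReal NNReal

/-!
`N u` is the sum of the `Lᵖ` norms of the two components of the graph point `(u, Du u)`, so the norm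
axioms are those of `Lᵖ`, once `Du` is seen to be linear and to respect a.e. equality (a null
set in `(0,1)` pulls back to a null set in `(0,1)²` under both projections). For completeness, a
Cauchy sequence `fₙ` gives `Lᵖ` limits `fₙ → u` and `Du fₙ → G`; along a subsequence both
converge a.e., and pointwise `Du fₙ (x, X) → Du u (x, X)`, so `Du u = G` a.e.: the graph of `Du`
is closed.
-/

theorem ae_prod_fst_and_snd {α β : Type*} [MeasurableSpace α] [MeasurableSpace β]
    {μ : Measure α} {ν : Measure β} {P : α → Prop} {Q : β → Prop}
    (hP : ∀ᵐ x ∂μ, P x) (hQ : ∀ᵐ y ∂ν, Q y) : ∀ᵐ q ∂μ.prod ν, P q.1 ∧ Q q.2 :=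
  (Measure.quasiMeasurePreserving_fst.ae hP).and (Measure.quasiMeasurePreserving_snd.ae hQ)

section DifferenceQuotient

variable {μ : Measure ℝ}

theorem Du_add (u v : ℝ → ℝ) : Du (u + v) = Du u + Du v := by
  funext q; simp only [Du, Pi.add_apply]; ring

theorem Du_sub (u v : ℝ → ℝ) : Du (u - v) = Du u - Du v := by
  funext q; simp only [Du, Pi.sub_apply]; ring

theorem Du_smul (c : ℝ) (u : ℝ → ℝ) : Du (c • u) = c • Du u := by
  funext q; simp only [Du, Pi.smul_apply, smul_eq_mul]; ring

theorem Du_zero : Du 0 = 0 := by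
  funext q; simp [Du]

theorem Du_congr_ae {u v : ℝ → ℝ} (h : u =ᵐ[μ] v) : Du u =ᵐ[μ.prod μ] Du v := by
  filter_upwards [ae_prod_fst_and_snd h h] with q hq
  simp only [Du, hq.1, hq.2]

theorem tendsto_Du_apply {ι : Type*} {l : Filter ι} {f : ι → ℝ → ℝ} {u : ℝ → ℝ} {q : ℝ × ℝ}
    (h₁ : Tendsto (fun i => f i q.1) l (𝓝 (u q.1)))
    (h₂ : Tendsto (fun i => f i q.2) l (𝓝 (u q.2))) :
    Tendsto (fun i => Du (f i) q) l (𝓝 (Du u q)) :=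
  (h₂.sub h₁).div_const _

variable {p : ℝ≥0∞}

theorem Du_coeFn_add (u v : Lp ℝ p μ) : Du ⇑(u + v) =ᵐ[μ.prod μ] Du u + Du v :=
  (Du_congr_ae (Lp.coeFn_add u v)).trans (Du_add u v).eventuallyEq

theorem Du_coeFn_sub (u v : Lp ℝ p μ) : Du ⇑(u - v) =ᵐ[μ.prod μ] Du u - Du v :=
  (Du_congr_ae (Lp.coeFn_sub u v)).trans (Du_sub u v).eventuallyEq

theorem Du_coeFn_smul (c : ℝ) (u : Lp ℝ p μ) : Du ⇑(c • u) =ᵐ[μ.prod μ] c • Du u :=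
  (Du_congr_ae (Lp.coeFn_smul c u)).trans (Du_smul c u).eventuallyEq

theorem Du_coeFn_zero : Du ⇑(0 : Lp ℝ p μ) =ᵐ[μ.prod μ] 0 :=
  (Du_congr_ae (Lp.coeFn_zero ℝ p μ)).trans Du_zero.eventuallyEq

theorem Du_ae_eq_of_tendsto [Fact (1 ≤ p)] {f : ℕ → Lp ℝ p μ} {u : Lp ℝ p μ}
    {g : ℕ → Lp ℝ p (μ.prod μ)} {G : Lp ℝ p (μ.prod μ)} (hf : Tendsto f atTop (𝓝 u))
    (hg : Tendsto g atTop (𝓝 G)) (hfg : ∀ n, g n =ᵐ[μ.prod μ] Du (f n)) :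
    Du u =ᵐ[μ.prod μ] G := by
  obtain ⟨ns, hns, hf_ae⟩ := (tendstoInMeasure_of_tendsto_Lp hf).exists_seq_tendsto_ae
  obtain ⟨ms, hms, hg_ae⟩ :=
    (tendstoInMeasure_of_tendsto_Lp (hg.comp hns.tendsto_atTop)).exists_seq_tendsto_ae
  have hfg_all : ∀ᵐ q ∂μ.prod μ, ∀ j, g (ns (ms j)) q = Du (f (ns (ms j))) q :=
    ae_all_iff.2 fun j => hfg _
  filter_upwards [ae_prod_fst_and_snd hf_ae hf_ae, hg_ae, hfg_all] with q hf_q hg_q hfg_q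
  refine tendsto_nhds_unique ?_ (hg_q.congr hfg_q)
  exact tendsto_Du_apply (hf_q.1.comp hms.tendsto_atTop) (hf_q.2.comp hms.tendsto_atTop)

end DifferenceQuotient

section NonlocalSobolev

variable (p : ℝ≥0∞) (μ : Measure ℝ)

def NW : Submodule ℝ (Lp ℝ p μ) where
  carrier := {u | MemLp (Du u) p (μ.prod μ)}
  add_mem' {u v} hu hv := (hu.add hv).ae_eq (Du_coeFn_add u v).symm
  zero_mem' := MemLp.zero.ae_eq Du_coeFn_zero.symm
  smul_mem' c u hu := (hu.const_smul c).ae_eq (Du_coeFn_smul c u).symm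

noncomputable def nwNorm (u : Lp ℝ p μ) : ℝ≥0∞ :=
  eLpNorm u p μ + eLpNorm (Du u) p (μ.prod μ)

variable {p μ}

theorem nwNorm_ne_top {u : Lp ℝ p μ} (hu : u ∈ NW p μ) : nwNorm p μ u ≠ ∞ :=
  ENNReal.add_ne_top.2 ⟨Lp.eLpNorm_ne_top u, hu.eLpNorm_ne_top⟩

theorem nwNorm_add_le [Fact (1 ≤ p)] {u v : Lp ℝ p μ} (hu : u ∈ NW p μ) (hv : v ∈ NW p μ) :
    nwNorm p μ (u + v) ≤ nwNorm p μ u + nwNorm p μ v := by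
  rw [nwNorm, nwNorm, nwNorm, eLpNorm_congr_ae (Lp.coeFn_add u v),
    eLpNorm_congr_ae (Du_coeFn_add u v), add_add_add_comm]
  exact add_le_add (eLpNorm_add_le (Lp.aestronglyMeasurable u) (Lp.aestronglyMeasurable v)
    Fact.out) (eLpNorm_add_le hu.aestronglyMeasurable hv.aestronglyMeasurable Fact.out)

theorem nwNorm_smul (c : ℝ) (u : Lp ℝ p μ) :
    nwNorm p μ (c • u) = ENNReal.ofReal |c| * nwNorm p μ u := by
  rw [nwNorm, nwNorm, eLpNorm_congr_ae (Lp.coeFn_smul c u), eLpNorm_congr_ae (Du_coeFn_smul c u),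
    eLpNorm_const_smul, eLpNorm_const_smul, ← mul_add, Real.enorm_eq_ofReal_abs]

theorem nwNorm_eq_zero_iff (hp : p ≠ 0) {u : Lp ℝ p μ} : nwNorm p μ u = 0 ↔ u = 0 := by
  refine ⟨fun h => ?_, ?_⟩
  · rw [Lp.eq_zero_iff_ae_eq_zero, ← eLpNorm_eq_zero_iff (Lp.aestronglyMeasurable u) hp]
    exact (add_eq_zero.1 h).1
  · rintro rfl
    rw [nwNorm, eLpNorm_congr_ae (Lp.coeFn_zero ℝ p μ), eLpNorm_congr_ae Du_coeFn_zero,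
      eLpNorm_zero, eLpNorm_zero, add_zero]

theorem nwNorm_sub_eq_edist_add_edist {u v : Lp ℝ p μ} (hu : u ∈ NW p μ) (hv : v ∈ NW p μ) :
    nwNorm p μ (u - v) = edist u v + edist (hu.toLp (Du u)) (hv.toLp (Du v)) := by
  rw [nwNorm, Lp.edist_def, Lp.edist_toLp_toLp _ _ hu hv, eLpNorm_congr_ae (Lp.coeFn_sub u v),
    eLpNorm_congr_ae (Du_coeFn_sub u v)]

theorem exists_tendsto_nwNorm_of_cauchy [Fact (1 ≤ p)] {f : ℕ → Lp ℝ p μ}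
    (hf : ∀ n, f n ∈ NW p μ)
    (hC : ∀ ε : ℝ≥0∞, 0 < ε → ∃ n₀ : ℕ, ∀ m ≥ n₀, ∀ n ≥ n₀, nwNorm p μ (f m - f n) < ε) :
    ∃ u ∈ NW p μ, Tendsto (fun n => nwNorm p μ (f n - u)) atTop (𝓝 0) := by
  set g : ℕ → Lp ℝ p (μ.prod μ) := fun n => (hf n).toLp (Du (f n))
  have hdist m n : nwNorm p μ (f m - f n) = edist (f m) (f n) + edist (g m) (g n) :=
    nwNorm_sub_eq_edist_add_edist (hf m) (hf n)
  have hf_cauchy : CauchySeq f := EMetric.cauchySeq_iff.2 fun ε hε =>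
    (hC ε hε).imp fun _ h m hm n hn => le_self_add.trans_lt ((hdist m n).symm ▸ h m hm n hn)
  have hg_cauchy : CauchySeq g := EMetric.cauchySeq_iff.2 fun ε hε =>
    (hC ε hε).imp fun _ h m hm n hn => le_add_self.trans_lt ((hdist m n).symm ▸ h m hm n hn)
  obtain ⟨u, hfu⟩ := cauchySeq_tendsto_of_complete hf_cauchy
  obtain ⟨G, hgG⟩ := cauchySeq_tendsto_of_complete hg_cauchy
  have hDu : Du u =ᵐ[μ.prod μ] G := Du_ae_eq_of_tendsto hfu hgG fun n => (hf n).coeFn_toLp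
  have hu : u ∈ NW p μ := (Lp.memLp G).ae_eq hDu.symm
  have hG : G = hu.toLp (Du u) := Lp.ext (hDu.symm.trans hu.coeFn_toLp.symm)
  refine ⟨u, hu, ?_⟩
  simp_rw [nwNorm_sub_eq_edist_add_edist (hf _) hu, ← hG]
  simpa using (tendsto_iff_edist_tendsto_0.1 hfu).add (tendsto_iff_edist_tendsto_0.1 hgG)

end NonlocalSobolev

theorem stmt3_general (p : ℝ≥0∞) [Fact (1 ≤ p)] :
    ∀ S : Set (Lp ℝ p muI), S = {u : Lp ℝ p muI | MemLp (Du ⇑u) p muS} →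
    ∀ N : Lp ℝ p muI → ℝ≥0∞,
      N = (fun (u : Lp ℝ p muI) => eLpNorm (⇑u) p muI + eLpNorm (Du ⇑u) p muS) →
    (∀ u ∈ S, N u ≠ ∞) ∧
    (∀ u ∈ S, ∀ v ∈ S, (u + v) ∈ S ∧ N (u + v) ≤ N u + N v) ∧
    (∀ (c : ℝ), ∀ u ∈ S, (c • u) ∈ S ∧ N (c • u) = ENNReal.ofReal |c| * N u) ∧
    (∀ u ∈ S, (N u = 0 ↔ u = 0)) ∧
    (∀ f : ℕ → Lp ℝ p muI, (∀ n, f n ∈ S) →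
      (∀ ε : ℝ≥0∞, 0 < ε → ∃ n₀ : ℕ, ∀ m ≥ n₀, ∀ n ≥ n₀, N (f m - f n) < ε) →
      ∃ u ∈ S, Tendsto (fun n => N (f n - u)) atTop (𝓝 0)) := by
  rintro S rfl N rfl
  exact ⟨fun u hu => nwNorm_ne_top hu,
    fun u hu v hv => ⟨(NW p muI).add_mem hu hv, nwNorm_add_le hu hv⟩,
    fun c u hu => ⟨(NW p muI).smul_mem c hu, nwNorm_smul c u⟩,
    fun u _ => nwNorm_eq_zero_iff (zero_lt_one.trans_le Fact.out).ne',
    fun f hf hC => exists_tendsto_nwNorm_of_cauchy hf hC⟩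

/-- `u ↦ ‖u‖_{Lᵖ} + ‖Du‖_{Lᵖ}` is a norm on `NW^{1,p}(0,1)` (finite, subadditive,
absolutely homogeneous, definite) and the space is complete for this norm. -/
theorem stmt3 (p : ℝ≥0∞) [Fact (1 ≤ p)] (hp : p ≠ ∞) :
    ∀ S : Set (Lp ℝ p muI), S = {u : Lp ℝ p muI | MemLp (Du ⇑u) p muS} →
    ∀ N : Lp ℝ p muI → ℝ≥0∞,
      N = (fun (u : Lp ℝ p muI) => eLpNorm (⇑u) p muI + eLpNorm (Du ⇑u) p muS) →
    (∀ u ∈ S, N u ≠ ∞) ∧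
    (∀ u ∈ S, ∀ v ∈ S, (u + v) ∈ S ∧ N (u + v) ≤ N u + N v) ∧
    (∀ (c : ℝ), ∀ u ∈ S, (c • u) ∈ S ∧ N (c • u) = ENNReal.ofReal |c| * N u) ∧
    (∀ u ∈ S, (N u = 0 ↔ u = 0)) ∧
    (∀ f : ℕ → Lp ℝ p muI, (∀ n, f n ∈ S) →
      (∀ ε : ℝ≥0∞, 0 < ε → ∃ n₀ : ℕ, ∀ m ≥ n₀, ∀ n ≥ n₀, N (f m - f n) < ε) →
      ∃ u ∈ S, Tendsto (fun n => N (f n - u)) atTop (𝓝 0)) :=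
  stmt3_general p
end

section
/- Let W : (0,1) × ℝ × ℝ → ℝ be measurable in its first variable, continuous in the last two variables, and bounded below by a constant. Define E(u) = ∫₀¹∫₀¹ W(x, u(x), Du(x,X)) dX dx with Du(x,X) = (u(X)-u(x))/(X-x). If u_j → u strongly in L^p(0,1), then E(u) ≤ liminf_{j→∞} E(u_j). -/
open MeasureTheory Set Real Filter Topology
open scoped ENNReal NNReal

/-!
Pass to a subsequence realising the liminf of the energies. Strong `Lᵖ` convergence implies
convergence in measure, so a further subsequence converges a.e. on `(0,1)`, hence a.e. in both
variables on the square. Off the diagonal, which is null, `Du` then converges pointwise, and the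
continuity of `W` in its last two variables makes the integrand converge a.e.; Fatou's lemma
concludes. No convexity is needed because the convergence of `Du` is pointwise, not weak.
-/

instance : SFinite muI := by unfold muI; infer_instance

instance : NullSingletonClass muI := by unfold muI; infer_instance

noncomputable def nonlocalEnergy (μ : Measure ℝ) (W : ℝ → ℝ → ℝ → ℝ) (c : ℝ) (u : ℝ → ℝ) :
    ℝ≥0∞ :=
  ∫⁻ z, ENNReal.ofReal (W z.1 (u z.1) (Du u z) - c) ∂μ.prod μ

theorem ae_prod_fst_ne_snd {α : Type*} [MeasurableSpace α] [MeasurableEq α]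
    (μ ν : Measure α) [SFinite ν] [NullSingletonClass ν] :
    ∀ᵐ z ∂μ.prod ν, z.1 ≠ z.2 := by
  refine (Measure.ae_prod_iff_ae_ae (p := fun z : α × α => z.1 ≠ z.2)
    measurableSet_diagonal.compl).2 ?_
  exact Eventually.of_forall fun x => (ν.ae_ne x).mono fun _ hy => hy.symm

theorem tendsto_Du {ι : Type*} {l : Filter ι} {v : ι → ℝ → ℝ} {u : ℝ → ℝ} {z : ℝ × ℝ}
    (h₁ : Tendsto (fun k => v k z.1) l (𝓝 (u z.1)))
    (h₂ : Tendsto (fun k => v k z.2) l (𝓝 (u z.2))) (hz : z.1 ≠ z.2) :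
    Tendsto (fun k => Du (v k) z) l (𝓝 (Du u z)) :=
  (h₂.sub h₁).div tendsto_const_nhds (sub_ne_zero.mpr hz.symm)

section Caratheodory

variable {μ : Measure ℝ} {W : ℝ → ℝ → ℝ → ℝ}
  (hWx : ∀ a b : ℝ, Measurable fun x => W x a b)
  (hWc : ∀ x : ℝ, Continuous fun q : ℝ × ℝ => W x q.1 q.2)
include hWx hWc

theorem aemeasurable_caratheodory_Du [SFinite μ] {v : ℝ → ℝ} (hv : AEMeasurable v μ) :
    AEMeasurable (fun z : ℝ × ℝ => W z.1 (v z.1) (Du v z)) (μ.prod μ) := by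
  have hW : Measurable fun q : (ℝ × ℝ) × ℝ => W q.2 q.1.1 q.1.2 :=
    measurable_uncurry_of_continuous_of_measurable
      (u := fun (q : ℝ × ℝ) (x : ℝ) => W x q.1 q.2) hWc fun q => hWx q.1 q.2
  have hv₁ : AEMeasurable (fun z : ℝ × ℝ => v z.1) (μ.prod μ) :=
    hv.comp_quasiMeasurePreserving Measure.quasiMeasurePreserving_fst
  have hv₂ : AEMeasurable (fun z : ℝ × ℝ => v z.2) (μ.prod μ) :=
    hv.comp_quasiMeasurePreserving Measure.quasiMeasurePreserving_snd
  have hDu : AEMeasurable (Du v) (μ.prod μ) :=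
    (hv₂.sub hv₁).div (measurable_snd.sub measurable_fst).aemeasurable
  exact hW.comp_aemeasurable ((hv₁.prodMk hDu).prodMk measurable_fst.aemeasurable)

variable [SFinite μ] [NullSingletonClass μ] (c : ℝ)

theorem nonlocalEnergy_le_liminf_of_ae_tendsto {ι : Type*} {l : Filter ι}
    [l.NeBot] [l.IsCountablyGenerated] {v : ι → ℝ → ℝ} {u : ℝ → ℝ}
    (hv : ∀ k, AEMeasurable (v k) μ)
    (h : ∀ᵐ x ∂μ, Tendsto (fun k => v k x) l (𝓝 (u x))) :
    nonlocalEnergy μ W c u ≤ liminf (fun k => nonlocalEnergy μ W c (v k)) l := by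
  have h₁ : ∀ᵐ z ∂μ.prod μ, Tendsto (fun k => v k z.1) l (𝓝 (u z.1)) :=
    Measure.quasiMeasurePreserving_fst.tendsto_ae.eventually h
  have h₂ : ∀ᵐ z ∂μ.prod μ, Tendsto (fun k => v k z.2) l (𝓝 (u z.2)) :=
    Measure.quasiMeasurePreserving_snd.tendsto_ae.eventually h
  have hlim : ∀ᵐ z ∂μ.prod μ,
      Tendsto (fun k => ENNReal.ofReal (W z.1 (v k z.1) (Du (v k) z) - c)) l
        (𝓝 (ENNReal.ofReal (W z.1 (u z.1) (Du u z) - c))) := by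
    filter_upwards [h₁, h₂, ae_prod_fst_ne_snd μ μ] with z hz₁ hz₂ hz
    have hW := ((hWc z.1).tendsto _).comp (hz₁.prodMk_nhds (tendsto_Du hz₁ hz₂ hz))
    exact (ENNReal.continuous_ofReal.tendsto _).comp (hW.sub tendsto_const_nhds)
  calc nonlocalEnergy μ W c u
      = ∫⁻ z, liminf (fun k => ENNReal.ofReal (W z.1 (v k z.1) (Du (v k) z) - c)) l
          ∂μ.prod μ :=
        lintegral_congr_ae (hlim.mono fun _ hz => hz.liminf_eq.symm)
    _ ≤ liminf (fun k => nonlocalEnergy μ W c (v k)) l :=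
        lintegral_liminf_le' fun k => ENNReal.measurable_ofReal.comp_aemeasurable
          ((aemeasurable_caratheodory_Du hWx hWc (hv k)).sub aemeasurable_const)

theorem nonlocalEnergy_le_liminf_of_tendstoInMeasure {v : ℕ → ℝ → ℝ} {u : ℝ → ℝ}
    (hv : ∀ k, AEMeasurable (v k) μ) (h : TendstoInMeasure μ v atTop u) :
    nonlocalEnergy μ W c u ≤ liminf (fun k => nonlocalEnergy μ W c (v k)) atTop := by
  obtain ⟨φ, hφlim, hφ⟩ := exists_seq_tendsto_liminf (f := atTop)
    (u := fun k => nonlocalEnergy μ W c (v k))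
  obtain ⟨ψ, hψ, hae⟩ := (h.comp hφ).exists_seq_tendsto_ae
  calc nonlocalEnergy μ W c u
      ≤ liminf (fun k => nonlocalEnergy μ W c (v (φ (ψ k)))) atTop :=
        nonlocalEnergy_le_liminf_of_ae_tendsto hWx hWc c (fun k => hv _) hae
    _ = liminf (fun k => nonlocalEnergy μ W c (v k)) atTop :=
        (hφlim.comp hψ.tendsto_atTop).liminf_eq

end Caratheodory

theorem stmt7_general (p : ℝ≥0∞) (hp1 : 1 ≤ p)
    (W : ℝ → ℝ → ℝ → ℝ)
    (hWx : ∀ a b : ℝ, Measurable fun x => W x a b)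
    (hWc : ∀ x : ℝ, Continuous fun q : ℝ × ℝ => W x q.1 q.2)
    (c : ℝ)
    (E : (ℝ → ℝ) → ℝ≥0∞)
    (hE : E = fun u => ∫⁻ z : ℝ × ℝ, ENNReal.ofReal (W z.1 (u z.1) (Du u z) - c) ∂muS)
    (useq : ℕ → ℝ → ℝ) (u : ℝ → ℝ)
    (hmem : ∀ j, MemLp (useq j) p muI) (hu : MemLp u p muI)
    (hconv : Tendsto (fun j => eLpNorm (useq j - u) p muI) atTop (𝓝 0)) :
    E u ≤ Filter.liminf (fun j => E (useq j)) atTop := by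
  have hp0 : p ≠ 0 := (zero_lt_one.trans_le hp1).ne'
  have hmeas : TendstoInMeasure muI useq atTop u :=
    tendstoInMeasure_of_tendsto_eLpNorm hp0 (fun j => (hmem j).aestronglyMeasurable)
      hu.aestronglyMeasurable hconv
  subst hE
  exact nonlocalEnergy_le_liminf_of_tendstoInMeasure hWx hWc c
    (fun j => (hmem j).aestronglyMeasurable.aemeasurable) hmeas

/-- Lower semicontinuity of the nonlocal energy `E(u) = ∫∫ W(x, u(x), Du(x,X))` along
strong `Lᵖ` convergent sequences: for a Carathéodory integrand `W` bounded below
(no convexity assumed), `E(u) ≤ liminf E(u_j)`.  The functional is encoded as an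
extended-real lower integral of the (nonnegative) integrand shifted by a lower bound. -/
theorem stmt7 (p : ℝ≥0∞) (hp1 : 1 ≤ p) (hp2 : p ≠ ∞)
    (W : ℝ → ℝ → ℝ → ℝ)
    (hWx : ∀ a b : ℝ, Measurable fun x => W x a b)
    (hWc : ∀ x : ℝ, Continuous fun q : ℝ × ℝ => W x q.1 q.2)
    (c : ℝ) (hWbd : ∀ x a b : ℝ, c ≤ W x a b)
    (E : (ℝ → ℝ) → ℝ≥0∞)
    (hE : E = fun u => ∫⁻ z : ℝ × ℝ, ENNReal.ofReal (W z.1 (u z.1) (Du u z) - c) ∂muS)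
    (useq : ℕ → ℝ → ℝ) (u : ℝ → ℝ)
    (hmem : ∀ j, MemLp (useq j) p muI) (hu : MemLp u p muI)
    (hconv : Tendsto (fun j => eLpNorm (useq j - u) p muI) atTop (𝓝 0)) :
    E u ≤ Filter.liminf (fun j => E (useq j)) atTop :=
  stmt7_general p hp1 W hWx hWc c E hE useq u hmem hu hconv
end
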